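/- Let 𝔤 be a Lie algebra over ℝ with subspaces 𝔨 and 𝔭 such that 𝔤 = 𝔨 ⊕ 𝔭 as vector spaces, ⁅𝔨,𝔨⁆ ⊆ 𝔨, ⁅𝔨,𝔭⁆ ⊆ 𝔭 and ⁅𝔭,𝔭⁆ ⊆ 𝔨. Fix v ∈ 𝔭 and set 𝔭' = {z ∈ 𝔭 : ⁅z,v⁆ = 0}. Then 𝔭' is a Lie triple system: for all x, y, z ∈ 𝔭' one has ⁅⁅x,y⁆,z⁆ ∈ 𝔭'. -/
import Mathlib

/-- Key step of Proposition 2.1: given a Cartan-type decomposition `g = k ⊕ p`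
with the bracket relations `⁅k,k⁆ ⊆ k`, `⁅k,p⁆ ⊆ p`, `⁅p,p⁆ ⊆ k`, and `v ∈ p`,
the centralizer `p' = {z ∈ p : ⁅z,v⁆ = 0}` is a Lie triple system:
for `x, y, z ∈ p'` one has `⁅⁅x,y⁆,z⁆ ∈ p'`. -/
theorem lie_triple_system_of_centralizer
    {L : Type*} [LieRing L] [LieAlgebra ℝ L]
    (k p : Submodule ℝ L) (hcompl : IsCompl k p)
    (hkk : ∀ x ∈ k, ∀ y ∈ k, ⁅x, y⁆ ∈ k)
    (hkp : ∀ x ∈ k, ∀ y ∈ p, ⁅x, y⁆ ∈ p)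
    (hpp : ∀ x ∈ p, ∀ y ∈ p, ⁅x, y⁆ ∈ k)
    (v : L) (hv : v ∈ p)
    (x y z : L)
    (hx : x ∈ p ∧ ⁅x, v⁆ = 0)
    (hy : y ∈ p ∧ ⁅y, v⁆ = 0)
    (hz : z ∈ p ∧ ⁅z, v⁆ = 0) :
    ⁅⁅x, y⁆, z⁆ ∈ p ∧ ⁅⁅⁅x, y⁆, z⁆, v⁆ = 0 := by
  obtain ⟨hxp, hxv⟩ := hx
  obtain ⟨hyp, hyv⟩ := hy
  obtain ⟨hzp, hzv⟩ := hz
  refine ⟨hkp _ (hpp _ hxp _ hyp) _ hzp, ?_⟩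
  have h1 : ⁅⁅x, y⁆, v⁆ = 0 := by
    rw [lie_lie, hxv, hyv, lie_zero, lie_zero, sub_zero]
  rw [lie_lie, hzv, h1, lie_zero, lie_zero, sub_zero]
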